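/- Monotonicity in demand: consider two instances on the same objects Ω, buyers N, supplies b and valuations v, with demand vectors d and d_new satisfying d j ≤ d_new j for all j ∈ N. Let p be a componentwise minimum Walrasian price vector for demands d and p_new one for demands d_new. Then p(i) ≤ p_new(i) for every object i ∈ Ω. -/

import Mathlib

/-!
Write `q = p ⊓ pnew`. A minimal Walrasian price vector admits a Walrasian allocation `x` selling
out any given set of positively priced objects, in particular `{pnew < p}`. Indirect utility is
submodular in prices and demand caps: for `d j ≤ dnew j`, a bundle valued at `q` together with a
bundle valued at `p ⊔ pnew` can be recombined into bundles valued at `p` and at `pnew` without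
loss. Summed over the buyers, and because `x` sells at least as much as any allocation wherever
`q < p`, this shows that `x` is still stable at `q`. So `q` is Walrasian for `d`, and minimality
of `p` gives `p ≤ q ≤ pnew`.
-/

open Finset

section MarketDefs

variable {Ω N : Type*}

/-- A bundle for a buyer with demand `dj`: at most `b i` copies of each object,
at most `dj` items in total. -/
def IsBundle [Fintype Ω] (b : Ω → ℕ) (dj : ℕ) (y : Ω → ℕ) : Prop :=
  (∀ i, y i ≤ b i) ∧ ∑ i, y i ≤ dj

/-- Utility of bundle `y` at prices `p` for a buyer with per-unit valuations `v`. -/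
noncomputable def utility [Fintype Ω] (v : Ω → ℕ) (p : Ω → ℝ) (y : Ω → ℕ) : ℝ :=
  ∑ i, ((v i : ℝ) - p i) * (y i : ℝ)

/-- `y` is a preferred bundle (member of the demand set `D_j(p)`). -/
def InDemand [Fintype Ω] (b : Ω → ℕ) (dj : ℕ) (v : Ω → ℕ) (p : Ω → ℝ) (y : Ω → ℕ) : Prop :=
  IsBundle b dj y ∧ ∀ z, IsBundle b dj z → utility v p z ≤ utility v p y

/-- Feasible allocation. -/
def Feasible [Fintype Ω] [Fintype N] (b : Ω → ℕ) (d : N → ℕ) (x : Ω → N → ℕ) : Prop :=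
  (∀ i, ∑ j, x i j ≤ b i) ∧ ∀ j, ∑ i, x i j ≤ d j

/-- Stable allocation at prices `p`: feasible, and every buyer gets a preferred bundle. -/
def Stable [Fintype Ω] [Fintype N] (b : Ω → ℕ) (d : N → ℕ) (v : Ω → N → ℕ)
    (p : Ω → ℝ) (x : Ω → N → ℕ) : Prop :=
  Feasible b d x ∧ ∀ j, InDemand b (d j) (fun i => v i j) p (fun i => x i j)

/-- Competitive price vector: nonnegative, and some allocation is stable for it. -/
def Competitive [Fintype Ω] [Fintype N] (b : Ω → ℕ) (d : N → ℕ) (v : Ω → N → ℕ)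
    (p : Ω → ℝ) : Prop :=
  (∀ i, 0 ≤ p i) ∧ ∃ x, Stable b d v p x

/-- Walrasian price vector: some stable allocation sells as much as possible. -/
def Walrasian [Fintype Ω] [Fintype N] (b : Ω → ℕ) (d : N → ℕ) (v : Ω → N → ℕ)
    (p : Ω → ℝ) : Prop :=
  (∀ i, 0 ≤ p i) ∧ ∃ x, Stable b d v p x ∧
    ∑ i, ∑ j, x i j = min (∑ i, b i) (∑ j, d j)

/-- Componentwise minimum Walrasian price vector. -/
def MinWalrasian [Fintype Ω] [Fintype N] (b : Ω → ℕ) (d : N → ℕ) (v : Ω → N → ℕ)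
    (p : Ω → ℝ) : Prop :=
  Walrasian b d v p ∧ ∀ q, Walrasian b d v q → ∀ i, p i ≤ q i

end MarketDefs

open Filter Topology

theorem Relation.ReflTransGen.exists_nodup_isChain_cons {α : Type*} {r : α → α → Prop} {a b : α}
    (h : Relation.ReflTransGen r a b) :
    ∃ l, (a :: l).IsChain r ∧ (a :: l).Nodup ∧ (a :: l).getLast (List.cons_ne_nil _ _) = b := by
  refine h.head_induction_on ⟨[], .singleton _, List.nodup_singleton _, rfl⟩ ?_
  rintro a c hac - ⟨l, hl, hnd, rfl⟩
  by_cases ha : a ∈ c :: l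
  · obtain ⟨s, t, hst⟩ := List.append_of_mem ha
    refine ⟨t, ?_, ?_, ?_⟩
    · rw [hst] at hl; exact hl.right_of_append
    · rw [hst] at hnd; exact hnd.sublist (List.sublist_append_right _ _)
    · simp only [hst, List.getLast_append_of_ne_nil _ (List.cons_ne_nil a t)]
  · exact ⟨c :: l, hl.cons_cons hac, List.nodup_cons.2 ⟨ha, hnd⟩, List.getLast_cons_cons ..⟩

theorem Finset.sum_update_add_self {ι : Type*} [Fintype ι] [DecidableEq ι] (f : ι → ℕ) (j : ι)
    (a : ℕ) : ∑ k, Function.update f j a k + f j = ∑ k, f k + a := by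
  rw [sum_update_of_mem (mem_univ j), sum_eq_add_sum_sdiff_singleton_of_mem (mem_univ j) f]
  ring

theorem exists_eq_add_single_of_pos {Ω : Type*} [DecidableEq Ω] {y : Ω → ℕ} {f : Ω}
    (hf : 0 < y f) :
    ∃ y₀, y = y₀ + (Pi.single f 1 : Ω → ℕ) :=
  ⟨y - Pi.single f 1, funext fun i => by
    by_cases hi : i = f
    · subst hi; simp; omega
    · simp [hi]⟩

section Bundles

variable {Ω : Type*} [Fintype Ω]

theorem utility_add (v : Ω → ℕ) (p : Ω → ℝ) (y z : Ω → ℕ) :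
    utility v p (y + z) = utility v p y + utility v p z := by
  simp only [utility, Pi.add_apply, Nat.cast_add, mul_add, sum_add_distrib]

theorem utility_single [DecidableEq Ω] (v : Ω → ℕ) (p : Ω → ℝ) (i : Ω) (n : ℕ) :
    utility v p (Pi.single i n) = ((v i : ℝ) - p i) * n := by
  simp only [utility]
  rw [Finset.sum_eq_single i (fun k _ hk => by simp [hk]) (by simp)]
  simp

theorem utility_sub_utility (v : Ω → ℕ) (p q : Ω → ℝ) (y : Ω → ℕ) :
    utility v p y - utility v q y = ∑ i, (q i - p i) * y i := by
  simp only [utility, ← sum_sub_distrib]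
  exact sum_congr rfl fun i _ => by ring

theorem finite_setOf_isBundle (b : Ω → ℕ) (c : ℕ) : {y | IsBundle b c y}.Finite := by
  classical
  exact (Set.finite_Iic b).subset fun _ hy => hy.1

theorem IsBundle.swap [DecidableEq Ω] {b : Ω → ℕ} {c : ℕ} {y₀ : Ω → ℕ} {e f : Ω}
    (hy : IsBundle b c (y₀ + Pi.single f 1)) (he : (y₀ + Pi.single f 1 : Ω → ℕ) e < b e) :
    IsBundle b c (y₀ + Pi.single e 1) := by
  refine ⟨fun i => ?_, ?_⟩
  · by_cases hi : i = e
    · subst hi; simp only [Pi.add_apply, Pi.single_eq_same] at he ⊢; omega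
    · simpa [hi] using (Nat.le_add_right _ _).trans (hy.1 i)
  · simpa [sum_add_distrib] using hy.2

theorem InDemand.swap [DecidableEq Ω] {b : Ω → ℕ} {c : ℕ} {v : Ω → ℕ} {p : Ω → ℝ}
    {y₀ : Ω → ℕ} {e f : Ω} (hy : InDemand b c v p (y₀ + Pi.single f 1))
    (he : (y₀ + Pi.single f 1 : Ω → ℕ) e < b e) (htie : (v e : ℝ) - p e = v f - p f) :
    InDemand b c v p (y₀ + Pi.single e 1) := by
  refine ⟨hy.1.swap he, fun z hz => ?_⟩
  rw [utility_add, utility_single, htie, ← utility_single, ← utility_add]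
  exact hy.2 z hz

theorem InDemand.margin_le [DecidableEq Ω] {b : Ω → ℕ} {c : ℕ} {v : Ω → ℕ} {p : Ω → ℝ}
    {y : Ω → ℕ} {e f : Ω} (hy : InDemand b c v p y) (hf : 0 < y f) (he : y e < b e) :
    (v e : ℝ) - p e ≤ v f - p f := by
  obtain ⟨y₀, rfl⟩ := exists_eq_add_single_of_pos hf
  have := hy.2 _ (hy.1.swap he)
  rw [utility_add, utility_add, utility_single, utility_single] at this
  simpa using this

/-- If `z` took more units from `T`, every unit that `y` holds beyond `z` would be swap-reachable
from `T`, hence in `T`, contradicting `∑ z ≤ c = ∑ y`. -/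
theorem InDemand.sum_le_of_closed [DecidableEq Ω] {b : Ω → ℕ} {c : ℕ} {v : Ω → ℕ} {p : Ω → ℝ}
    {y z : Ω → ℕ} (T : Finset Ω) (hy : InDemand b c v p y) (hcap : ∑ i, y i = c)
    (hT : ∀ e f, e ∈ T → y e < b e → 0 < y f → (v e : ℝ) - p e = v f - p f → f ∈ T)
    (hz : InDemand b c v p z) : ∑ i ∈ T, z i ≤ ∑ i ∈ T, y i := by
  by_contra! hlt
  obtain ⟨e, heT, he⟩ := exists_lt_of_sum_lt hlt
  have hout : ∀ i ∈ Tᶜ, y i ≤ z i := fun f hf => by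
    by_contra! hf'
    have h₁ := hy.margin_le (e := e) (f := f) (by omega) (he.trans_le (hz.1.1 e))
    have h₂ := hz.margin_le (e := f) (f := e) (by omega) (hf'.trans_le (hy.1.1 f))
    exact mem_compl.1 hf (hT e f heT (he.trans_le (hz.1.1 e)) (by omega) (le_antisymm h₁ h₂))
  have := sum_le_sum hout
  have := sum_add_sum_compl T y
  have := sum_add_sum_compl T z
  have := hz.1.2
  omega

end Bundles

section Submodularity

variable {Ω : Type*} [Fintype Ω]

/-- Units are moved one at a time from the overfull bundle `y` (valued at `p`) to `z` (valued at
`p'`); each moved unit `i` has `y i > s i`, hence `p' i ≤ p i`, so no move loses utility. -/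
theorem exists_bundles_of_transfer [DecidableEq Ω] (v b s : Ω → ℕ) {c c₂ n : ℕ} {p p' : Ω → ℝ}
    {y z : Ω → ℕ} (hs : ∑ i, s i ≤ c) (hy : ∑ i, y i = c + n)
    (hyz : ∑ i, y i + ∑ i, z i ≤ c + c₂) (hyb : ∀ i, y i ≤ b i) (hzb : ∀ i, z i ≤ b i)
    (hsb : ∀ i, y i + z i ≤ s i + b i) (hps : ∀ i, p i < p' i → y i ≤ s i) :
    ∃ y' z', IsBundle b c y' ∧ IsBundle b c₂ z' ∧
      utility v p y + utility v p' z ≤ utility v p y' + utility v p' z' := by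
  induction n generalizing y z with
  | zero => exact ⟨y, z, ⟨hyb, hy.le⟩, ⟨hzb, by omega⟩, le_rfl⟩
  | succ n ih =>
    obtain ⟨i, -, hi⟩ := exists_lt_of_sum_lt (s := univ) (f := s) (g := y) (by omega)
    have hpi : p' i ≤ p i := not_lt.1 fun h => (hps i h).not_gt hi
    obtain ⟨y₁, rfl⟩ := exists_eq_add_single_of_pos (hi.trans_le' (Nat.zero_le _))
    have hzi : z i < b i := by have := hsb i; simp at hi this; omega
    obtain ⟨y', z', hy', hz', hle⟩ := ih (y := y₁) (z := z + Pi.single i 1)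
      (by simp [sum_add_distrib] at hy; omega)
      (by simp [sum_add_distrib] at hyz ⊢; omega)
      (fun k => (Nat.le_add_right _ _).trans (hyb k))
      (fun k => by by_cases hk : k = i <;> simp [hk] <;> [omega; exact hzb k])
      (fun k => by have := hsb k; by_cases hk : k = i <;> simp [hk] at this ⊢ <;> omega)
      (fun k hk => (Nat.le_add_right _ _).trans (hps k hk))
    refine ⟨y', z', hy', hz', le_trans ?_ hle⟩
    simp only [utility_add, utility_single, Nat.cast_one, mul_one] at hle ⊢
    linarith

/-- Submodularity of indirect utility in prices and demand: the bundle pair `(y, z)` is cut along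
`{p ≤ p'}` and recombined into a bundle valued at `p` and one valued at `p'`, with the same total
value; any excess over the caps is then moved to the other bundle. -/
theorem exists_bundles_utility_inf_add_utility_sup_le (v b : Ω → ℕ) {c c' : ℕ} (hc : c ≤ c')
    (p p' : Ω → ℝ) {y z : Ω → ℕ} (hy : IsBundle b c y) (hz : IsBundle b c' z) :
    ∃ y' z', IsBundle b c y' ∧ IsBundle b c' z' ∧
      utility v (p ⊓ p') y + utility v (p ⊔ p') z ≤ utility v p y' + utility v p' z' := by
  classical
  set y₀ : Ω → ℕ := fun i => if p i ≤ p' i then y i else z i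
  set z₀ : Ω → ℕ := fun i => if p i ≤ p' i then z i else y i
  have hsplit :
      utility v (p ⊓ p') y + utility v (p ⊔ p') z = utility v p y₀ + utility v p' z₀ := by
    simp only [utility, ← sum_add_distrib]
    refine sum_congr rfl fun i _ => ?_
    by_cases h : p i ≤ p' i
    · simp [y₀, z₀, h]
    · simp [y₀, z₀, h, le_of_not_ge h]; ring
  have hy₀ : ∀ i, y₀ i ≤ b i := fun i => by
    by_cases h : p i ≤ p' i <;> simp [y₀, h, hy.1, hz.1]
  have hz₀ : ∀ i, z₀ i ≤ b i := fun i => by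
    by_cases h : p i ≤ p' i <;> simp [z₀, h, hy.1, hz.1]
  have hyz₀ : ∀ i, y₀ i + z₀ i = y i + z i := fun i => by
    by_cases h : p i ≤ p' i <;> simp [y₀, z₀, h, add_comm]
  have htotal : ∑ i, y₀ i + ∑ i, z₀ i ≤ c + c' := by
    rw [← sum_add_distrib, sum_congr rfl fun i _ => hyz₀ i, sum_add_distrib]
    exact add_le_add hy.2 hz.2
  rw [hsplit]
  rcases le_or_gt (∑ i, y₀ i) c with hyc | hyc
  · rcases le_or_gt (∑ i, z₀ i) c' with hzc | hzc
    · exact ⟨y₀, z₀, ⟨hy₀, hyc⟩, ⟨hz₀, hzc⟩, le_rfl⟩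
    · obtain ⟨n, hn⟩ := Nat.exists_eq_add_of_le hzc.le
      obtain ⟨z', y', hz', hy', hle⟩ := exists_bundles_of_transfer (c₂ := c) (p := p') (p' := p)
        v b y (hy.2.trans hc) hn (by omega) hz₀ hy₀
        (fun i => by rw [add_comm, hyz₀]; exact Nat.add_le_add_left (hz.1 i) _)
        (fun i h => by simp [z₀, not_le.2 h])
      exact ⟨y', z', hy', hz', by linarith⟩
  · obtain ⟨n, hn⟩ := Nat.exists_eq_add_of_le hyc.le
    exact exists_bundles_of_transfer v b y hy.2 hn htotal hy₀ hz₀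
      (fun i => by rw [hyz₀]; exact Nat.add_le_add_left (hz.1 i) _)
      (fun i h => by simp [y₀, h.le])

end Submodularity

section SwapEdge

variable {Ω N : Type*} {b : Ω → ℕ} {v : Ω → N → ℕ} {p : Ω → ℝ} {x : Ω → N → ℕ}

def SwapEdge (b : Ω → ℕ) (v : Ω → N → ℕ) (p : Ω → ℝ) (x : Ω → N → ℕ) (e f : Ω) : Prop :=
  ∃ j, x e j < b e ∧ 0 < x f j ∧ (v e j : ℝ) - p e = v f j - p f

theorem SwapEdge.mono {x₁ : Ω → N → ℕ} {e f : Ω} (h : SwapEdge b v p x e f)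
    (he : ∀ k, x₁ e k ≤ x e k) (hf : ∀ k, x f k ≤ x₁ f k) : SwapEdge b v p x₁ e f :=
  let ⟨j, hj⟩ := h
  ⟨j, (he j).trans_lt hj.1, hj.2.1.trans_le (hf j), hj.2.2⟩

end SwapEdge

section Allocations

variable {Ω N : Type*} [Fintype Ω] [Fintype N] {b : Ω → ℕ} {d : N → ℕ} {v : Ω → N → ℕ}
  {p : Ω → ℝ} {x : Ω → N → ℕ}

def IsWalrasianAllocation (b : Ω → ℕ) (d : N → ℕ) (v : Ω → N → ℕ) (p : Ω → ℝ)
    (x : Ω → N → ℕ) : Prop :=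
  Stable b d v p x ∧ ∑ i, ∑ j, x i j = min (∑ i, b i) (∑ j, d j)

theorem finite_setOf_isWalrasianAllocation (b : Ω → ℕ) (d : N → ℕ) (v : Ω → N → ℕ)
    (p : Ω → ℝ) : {x | IsWalrasianAllocation b d v p x}.Finite := by
  classical
  refine (Set.finite_Iic fun i (_ : N) => b i).subset fun x hx i j => ?_
  exact (single_le_sum (fun _ _ => Nat.zero_le _) (mem_univ j)).trans (hx.1.1.1 i)

theorem IsWalrasianAllocation.sum_eq_of_lt (hx : IsWalrasianAllocation b d v p x) {i₀ : Ω}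
    (hi₀ : ∑ k, x i₀ k < b i₀) (j : N) : ∑ i, x i j = d j := by
  have hlt : ∑ i, ∑ k, x i k < ∑ i, b i :=
    sum_lt_sum (fun i _ => hx.1.1.1 i) ⟨i₀, mem_univ _, hi₀⟩
  have htotal : ∑ k, ∑ i, x i k = ∑ k, d k := by
    rw [sum_comm, hx.2]; have := hx.2; omega
  exact (sum_eq_sum_iff_of_le fun k _ => hx.1.1.2 k).1 htotal j (mem_univ j)

theorem IsWalrasianAllocation.update [DecidableEq N] (hx : IsWalrasianAllocation b d v p x)
    {j : N} {y : Ω → ℕ} (hy : InDemand b (d j) (fun i => v i j) p y)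
    (hsum : ∑ i, y i = ∑ i, x i j) (hb : ∀ i, ∑ k, Function.update (x i) j (y i) k ≤ b i) :
    IsWalrasianAllocation b d v p fun i => Function.update (x i) j (y i) := by
  have hcol : ∀ k, ∑ i, Function.update (x i) j (y i) k = ∑ i, x i k := fun k => by
    by_cases hk : k = j
    · subst hk; simpa using hsum
    · simp [hk]
  refine ⟨⟨⟨hb, fun k => (hcol k).trans_le (hx.1.1.2 k)⟩, fun k => ?_⟩, ?_⟩
  · by_cases hk : k = j
    · subst hk; simpa using hy
    · simpa [hk] using hx.1.2 k
  · rw [sum_comm, sum_congr rfl fun k _ => hcol k, sum_comm, hx.2]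

theorem IsWalrasianAllocation.exists_swap [DecidableEq Ω] [DecidableEq N]
    (hx : IsWalrasianAllocation b d v p x) {e f : Ω} (he : ∑ k, x e k < b e)
    (hef : SwapEdge b v p x e f) :
    ∃ x₁, IsWalrasianAllocation b d v p x₁ ∧
      (∀ i, ∑ k, x₁ i k + (if i = f then 1 else 0) = ∑ k, x i k + (if i = e then 1 else 0)) ∧
      (∀ g, g ≠ e → ∀ k, x₁ g k ≤ x g k) ∧ (∀ g, g ≠ f → ∀ k, x g k ≤ x₁ g k) := by
  obtain ⟨j, hroom, hpos, htie⟩ := hef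
  obtain ⟨y₀, hy₀⟩ := exists_eq_add_single_of_pos (y := fun i => x i j) hpos
  have hcol : ∀ i, x i j = y₀ i + if i = f then 1 else 0 := fun i => by
    simpa [Pi.single_apply] using congrFun hy₀ i
  set y : Ω → ℕ := y₀ + Pi.single e 1 with hy
  have hD : InDemand b (d j) (fun i => v i j) p y := by
    have := hx.1.2 j
    rw [hy₀] at this
    exact this.swap (by rw [← hy₀]; exact hroom) htie
  have hrow : ∀ i, ∑ k, Function.update (x i) j (y i) k
      + (if i = f then 1 else 0) = ∑ k, x i k + (if i = e then 1 else 0) := fun i => by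
    have := sum_update_add_self (x i) j (y i)
    have hyi : y i = y₀ i + if i = e then 1 else 0 := by simp [hy, Pi.single_apply]
    have := hcol i
    omega
  have hentry : ∀ g k, Function.update (x g) j (y g) k
      = if k = j then y₀ g + (if g = e then 1 else 0) else x g k := fun g k => by
    by_cases hk : k = j <;> simp [hk, hy, Pi.single_apply]
  refine ⟨_, hx.update hD ?_ fun i => ?_, hrow, fun g hg k => ?_, fun g hg k => ?_⟩
  · simp [hy, sum_add_distrib, hy₀]
  · have := hrow i
    have := hx.1.1.1 i
    by_cases hi : i = e
    · subst hi; split_ifs at * <;> omega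
    · simp only [hi, if_false] at *; omega
  · rw [hentry]; split_ifs <;> simp_all
  · rw [hentry]; split_ifs <;> simp_all

end Allocations

section FullSale

variable {Ω N : Type*} [Fintype Ω] [Fintype N] {b : Ω → ℕ} {d : N → ℕ} {v : Ω → N → ℕ}
  {p : Ω → ℝ} {x : Ω → N → ℕ}

/-- The swaps are performed from the head of the chain on; `Nodup` ensures that each swap leaves
the later edges of the chain intact. -/
theorem IsWalrasianAllocation.exists_shift_of_isChain [DecidableEq Ω] [DecidableEq N]
    {l : List Ω} {e : Ω} (hx : IsWalrasianAllocation b d v p x) (he : ∑ k, x e k < b e)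
    (hl : (e :: l).IsChain (SwapEdge b v p x)) (hnd : (e :: l).Nodup) :
    ∃ x', IsWalrasianAllocation b d v p x' ∧ ∀ i,
      ∑ k, x' i k + (if i = (e :: l).getLast (List.cons_ne_nil _ _) then 1 else 0)
        = ∑ k, x i k + (if i = e then 1 else 0) := by
  induction l generalizing x e with
  | nil => exact ⟨x, hx, fun i => rfl⟩
  | cons f l ih =>
    rw [List.isChain_cons_cons] at hl
    obtain ⟨hef, hfl⟩ := List.nodup_cons.1 hnd
    obtain ⟨x₁, hx₁, hrow, hle, hge⟩ := hx.exists_swap he hl.1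
    have hf : ∑ k, x₁ f k < b f := by
      have := hrow f
      rw [if_pos rfl, if_neg (Ne.symm (List.ne_of_not_mem_cons hef))] at this
      have := hx.1.1.1 f
      omega
    have hl₁ : (f :: l).IsChain (SwapEdge b v p x₁) :=
      hl.2.imp_of_mem_tail_imp fun g h hg hh hgh =>
        hgh.mono (hle g (fun hge => hef (hge ▸ hg)))
          (hge h fun hhf => (List.nodup_cons.1 hfl).1 (hhf ▸ hh))
    obtain ⟨x', hx', hrow'⟩ := ih hx₁ hf hl₁ hfl
    refine ⟨x', hx', fun i => ?_⟩
    have := hrow i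
    have := hrow' i
    rw [List.getLast_cons_cons]
    omega

theorem IsWalrasianAllocation.exists_shift [DecidableEq Ω] [DecidableEq N]
    (hx : IsWalrasianAllocation b d v p x) {e f : Ω} (he : ∑ k, x e k < b e)
    (hef : Relation.ReflTransGen (SwapEdge b v p x) e f) :
    ∃ x', IsWalrasianAllocation b d v p x' ∧
      ∀ i, ∑ k, x' i k + (if i = f then 1 else 0) = ∑ k, x i k + (if i = e then 1 else 0) := by
  obtain ⟨l, hl, hnd, rfl⟩ := hef.exists_nodup_isChain_cons
  exact hx.exists_shift_of_isChain he hl hnd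

def lowerPrices [DecidableEq Ω] (T : Finset Ω) (ε : ℝ) (p : Ω → ℝ) : Ω → ℝ :=
  fun i => p i - if i ∈ T then ε else 0

theorem utility_lowerPrices [DecidableEq Ω] (w : Ω → ℕ) (T : Finset Ω) (ε : ℝ) (y : Ω → ℕ) :
    utility w (lowerPrices T ε p) y = utility w p y + ε * ∑ i ∈ T, (y i : ℝ) := by
  have h : ∀ i, ((w i : ℝ) - lowerPrices T ε p i) * y i
      = (w i - p i) * y i + if i ∈ T then ε * y i else 0 := fun i => by
    simp only [lowerPrices]; split_ifs <;> ring
  simp only [utility, h, sum_add_distrib, sum_ite_mem, univ_inter, mul_sum]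

theorem Stable.eventually_stable_lowerPrices [DecidableEq Ω] (hx : Stable b d v p x)
    (hcap : ∀ j, ∑ i, x i j = d j) (T : Finset Ω)
    (hT : ∀ e ∈ T, ∀ f, SwapEdge b v p x e f → f ∈ T) :
    ∀ᶠ ε in 𝓝[>] 0, Stable b d v (lowerPrices T ε p) x := by
  have key : ∀ j, ∀ z ∈ {z | IsBundle b (d j) z}, ∀ᶠ ε in 𝓝[>] (0 : ℝ),
      utility (fun i => v i j) (lowerPrices T ε p) z
        ≤ utility (fun i => v i j) (lowerPrices T ε p) (fun i => x i j) := by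
    intro j z hz
    simp only [utility_lowerPrices]
    rcases ((hx.2 j).2 z hz).lt_or_eq with hlt | heq
    · refine (ContinuousAt.eventually_lt (by fun_prop) (by fun_prop) ?_).filter_mono
        nhdsWithin_le_nhds |>.mono fun ε => le_of_lt
      simpa using hlt
    · have hTz := (hx.2 j).sum_le_of_closed T (hcap j)
        (fun e f he hroom hpos htie => hT e he f ⟨j, hroom, hpos, htie⟩)
        ⟨hz, fun w hw => heq ▸ (hx.2 j).2 w hw⟩
      filter_upwards [self_mem_nhdsWithin] with ε (hε : 0 < ε)
      rw [heq]
      gcongr _ + ε * ?_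
      exact_mod_cast hTz
  filter_upwards [eventually_all.2 fun j =>
    (finite_setOf_isBundle b (d j)).eventually_all.2 (key j)] with ε hε
  exact ⟨hx.1, fun j => ⟨(hx.2 j).1, hε j⟩⟩

theorem IsWalrasianAllocation.exists_walrasian_lowerPrices [DecidableEq Ω]
    (hx : IsWalrasianAllocation b d v p x) (hcap : ∀ j, ∑ i, x i j = d j) (T : Finset Ω)
    (hT : ∀ e ∈ T, ∀ f, SwapEdge b v p x e f → f ∈ T)
    (hp : ∀ i, 0 ≤ p i) (hpos : ∀ i ∈ T, 0 < p i) :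
    ∃ ε > 0, Walrasian b d v (lowerPrices T ε p) := by
  have hsmall : ∀ᶠ ε in 𝓝[>] (0 : ℝ), ∀ i ∈ T, ε < p i :=
    (eventually_all_finset T).2 fun i hi => (eventually_lt_nhds (hpos i hi)).filter_mono
      nhdsWithin_le_nhds
  obtain ⟨ε, hε, hεp, hstable⟩ := (eventually_mem_nhdsWithin.and (hsmall.and
    (hx.1.eventually_stable_lowerPrices hcap T hT))).exists
  refine ⟨ε, hε, fun i => ?_, x, hstable, hx.2⟩
  by_cases hi : i ∈ T
  · simpa [lowerPrices, hi] using (hεp i hi).le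
  · simpa [lowerPrices, hi] using hp i

/-- Take a Walrasian allocation maximizing the sales on `S`. If `i₀ ∈ S` is not sold out, let `T`
be the objects swap-reachable from `i₀`: if all of them have positive price, lowering their prices
contradicts minimality of `p`; otherwise a swap chain to a free object sells more of `S`. -/
theorem MinWalrasian.exists_allocation_sells_out (hp : MinWalrasian b d v p) (S : Finset Ω)
    (hS : ∀ i ∈ S, 0 < p i) :
    ∃ x, IsWalrasianAllocation b d v p x ∧ ∀ i ∈ S, ∑ j, x i j = b i := by
  classical
  obtain ⟨x, hx, hmax⟩ := Set.exists_max_image _ (fun x => ∑ i ∈ S, ∑ j, x i j)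
    (finite_setOf_isWalrasianAllocation b d v p) hp.1.2
  refine ⟨x, hx, fun i₀ hi₀ => (hx.1.1.1 i₀).eq_or_lt.resolve_right fun hlt => ?_⟩
  set T := univ.filter (Relation.ReflTransGen (SwapEdge b v p x) i₀)
  by_cases hTpos : ∀ i ∈ T, 0 < p i
  · have hT : ∀ e ∈ T, ∀ f, SwapEdge b v p x e f → f ∈ T := fun e he f hef =>
      mem_filter.2 ⟨mem_univ f, (mem_filter.1 he).2.tail hef⟩
    obtain ⟨ε, hε, hW⟩ :=
      hx.exists_walrasian_lowerPrices (hx.sum_eq_of_lt hlt) T hT hp.1.1 hTpos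
    have := hp.2 _ hW i₀
    simp [lowerPrices, T, Relation.ReflTransGen.refl] at this
    linarith
  · push Not at hTpos
    obtain ⟨f, hfT, hf⟩ := hTpos
    obtain ⟨x', hx', hrow⟩ := hx.exists_shift hlt (mem_filter.1 hfT).2
    have hfS : f ∉ S := fun h => (hS f h).not_ge hf
    have hsum := sum_congr rfl fun i (_ : i ∈ S) => hrow i
    simp only [sum_add_distrib, sum_ite_eq', hi₀, hfS, if_true, if_false] at hsum
    have := hmax x' hx'
    omega

end FullSale

/-- With `δ = p - p ⊓ p'`, submodularity bounds each buyer's gain from deviating at `p ⊓ p'` by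
`D j = Σ δ (x' - x)`; these are nonnegative and, as `x` sells at least as much as `x'` where
`δ > 0`, sum to at most zero, so all vanish. -/
theorem Stable.inf {Ω N : Type*} [Fintype Ω] [Fintype N] {b : Ω → ℕ}
    {d d' : N → ℕ} {v : Ω → N → ℕ} {p p' : Ω → ℝ} {x x' : Ω → N → ℕ} (hd : ∀ j, d j ≤ d' j)
    (hx : Stable b d v p x) (hx' : Stable b d' v p' x')
    (hsold : ∀ i, p' i < p i → ∑ j, x' i j ≤ ∑ j, x i j) : Stable b d v (p ⊓ p') x := by
  set δ : Ω → ℝ := fun i => p i - (p ⊓ p') i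
  set D : N → ℝ := fun j => ∑ i, δ i * ((x' i j : ℝ) - x i j)
  have key : ∀ j y, IsBundle b (d j) y → utility (fun i => v i j) (p ⊓ p') y
      ≤ utility (fun i => v i j) (p ⊓ p') (fun i => x i j) + D j := by
    intro j y hy
    obtain ⟨y', z', hy', hz', hle⟩ :=
      exists_bundles_utility_inf_add_utility_sup_le (fun i => v i j) b (hd j) p p' hy (hx'.2 j).1
    have h₁ := (hx.2 j).2 y' hy'
    have h₂ := (hx'.2 j).2 z' hz'
    have h₃ := utility_sub_utility (fun i => v i j) (p ⊓ p') p (fun i => x i j)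
    have h₄ := utility_sub_utility (fun i => v i j) p' (p ⊔ p') (fun i => x' i j)
    have h₅ : ∑ i, ((p ⊔ p') i - p' i) * x' i j - ∑ i, (p i - (p ⊓ p') i) * x i j = D j := by
      rw [← sum_sub_distrib]
      refine sum_congr rfl fun i _ => ?_
      have := min_add_max (p i) (p' i)
      simp only [δ, Pi.inf_apply, Pi.sup_apply] at this ⊢
      linear_combination (x' i j : ℝ) * this
    linarith
  have hD_nonneg : ∀ j, 0 ≤ D j := fun j => by simpa using key j _ (hx.2 j).1
  have hD_sum : ∑ j, D j ≤ 0 := by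
    simp only [D, sum_comm (γ := N), ← mul_sum, sum_sub_distrib]
    refine sum_nonpos fun i _ => ?_
    rcases lt_or_ge (p' i) (p i) with h | h
    · refine mul_nonpos_of_nonneg_of_nonpos (by simp [δ]) (sub_nonpos.2 ?_)
      exact_mod_cast hsold i h
    · simp [δ, h]
  have hD : ∀ j, D j = 0 := fun j =>
    (sum_eq_zero_iff_of_nonneg fun j _ => hD_nonneg j).1
      (le_antisymm hD_sum (sum_nonneg fun j _ => hD_nonneg j)) j (mem_univ j)
  exact ⟨hx.1, fun j => ⟨(hx.2 j).1, fun y hy => by simpa [hD j] using key j y hy⟩⟩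

/-- monotonicity of buyer-optimal Walrasian prices in the demand. -/
theorem min_walrasian_prices_monotone_in_demand
    {Ω N : Type*} [Fintype Ω] [Fintype N]
    (v : Ω → N → ℕ) (b : Ω → ℕ) (d dnew : N → ℕ)
    (hd : ∀ j, d j ≤ dnew j)
    (p pnew : Ω → ℝ)
    (hp : MinWalrasian b d v p) (hpnew : MinWalrasian b dnew v pnew) :
    ∀ i, p i ≤ pnew i := by
  classical
  obtain ⟨hpnew_nonneg, x', hx', -⟩ := hpnew.1
  obtain ⟨x, hx, hsells⟩ := hp.exists_allocation_sells_out (univ.filter fun i => pnew i < p i)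
    fun i hi => (hpnew_nonneg i).trans_lt (mem_filter.1 hi).2
  have hinf : Walrasian b d v (p ⊓ pnew) :=
    ⟨fun i => le_inf (hp.1.1 i) (hpnew_nonneg i), x,
      hx.1.inf hd hx' fun i hi => (hsells i (by simpa using hi)).symm ▸ hx'.1.1 i, hx.2⟩
  exact fun i => (hp.2 _ hinf i).trans inf_le_right
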